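/- arXiv:0707.0644 — 5 statements merged into one kernel-verified Lean document; each statement's English description precedes it below -/
import Mathlib

section
/- Let b₁, b₂ be linearly independent vectors in ℝ², let m = ⟨b₂,b₁⟩/⟨b₁,b₁⟩ and assume the basis is proper, i.e. −1/2 ≤ m < 1/2. Let x be an integer with |x| ≥ 2, and define b̃₁ = b₂ + x·b₁ and b̃₂ = b₁. Then |b̃₂| < |b̃₁|. -/
open RealInnerProductSpace

section SizeReduced

variable {E : Type*} [NormedAddCommGroup E] [InnerProductSpace ℝ E]

theorem norm_add_smul_sq_real (u v : E) (t : ℝ) :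
    ‖u + t • v‖ ^ 2 = ‖u‖ ^ 2 + 2 * t * ⟪u, v⟫ + t ^ 2 * ‖v‖ ^ 2 := by
  rw [norm_add_sq_real, real_inner_smul_right, norm_smul, mul_pow, Real.norm_eq_abs, sq_abs]
  ring

theorem abs_inner_le_half_sq_of_abs_div_le {u v : E} (hv : v ≠ 0)
    (h : |⟪u, v⟫ / ⟪v, v⟫| ≤ 1 / 2) : |⟪u, v⟫| ≤ ‖v‖ ^ 2 / 2 := by
  have hvv : 0 < ⟪v, v⟫ := real_inner_self_pos.mpr hv
  rw [abs_div, abs_of_pos hvv, div_le_iff₀ hvv, real_inner_self_eq_norm_sq] at h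
  linarith

/-- The cross term `2 t ⟪u, v⟫` is at least `-|t| ‖v‖²`, so
`‖u + t v‖² ≥ ‖v‖² (t² - |t|) ≥ 2 ‖v‖²` once `|t| ≥ 2`. -/
theorem norm_lt_norm_add_smul_of_abs_inner_le {u v : E} (hv : v ≠ 0)
    (huv : |⟪u, v⟫| ≤ ‖v‖ ^ 2 / 2) {t : ℝ} (ht : 2 ≤ |t|) :
    ‖v‖ < ‖u + t • v‖ := by
  have hv2 : 0 < ‖v‖ ^ 2 := by positivity
  have hcross : -(|t| * ‖v‖ ^ 2) ≤ 2 * t * ⟪u, v⟫ := by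
    have := neg_abs_le (t * ⟪u, v⟫)
    rw [abs_mul] at this
    nlinarith [abs_nonneg t]
  have ht2 : 2 * ‖v‖ ^ 2 ≤ (t ^ 2 - |t|) * ‖v‖ ^ 2 := by
    rw [← sq_abs t]
    gcongr
    nlinarith
  refine lt_of_pow_lt_pow_left₀ 2 (norm_nonneg _) ?_
  rw [norm_add_smul_sq_real]
  nlinarith [sq_nonneg ‖u‖]

end SizeReduced

theorem stmt_7 (b₁ b₂ : EuclideanSpace ℝ (Fin 2))
    (hind : LinearIndependent ℝ ![b₁, b₂])
    (m : ℝ) (hm : m = (inner ℝ b₂ b₁ : ℝ) / (inner ℝ b₁ b₁ : ℝ))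
    (hproper : -(1 / 2) ≤ m ∧ m < 1 / 2)
    (x : ℤ) (hx : 2 ≤ |x|) :
    ‖b₁‖ < ‖b₂ + (x : ℝ) • b₁‖ := by
  have hb₁ : b₁ ≠ 0 := by simpa using hind.ne_zero 0
  have hm' : |m| ≤ 1 / 2 := abs_le.mpr ⟨hproper.1, hproper.2.le⟩
  rw [hm] at hm'
  refine norm_lt_norm_add_smul_of_abs_inner_le hb₁
    (abs_inner_le_half_sq_of_abs_div_le hb₁ hm') ?_
  exact_mod_cast hx
end

section
/- Let (b₁,b₂) be a proper basis of ℝ² (i.e. m = ⟨b₂,b₁⟩/⟨b₁,b₁⟩ satisfies −1/2 ≤ m < 1/2), and let x be an integer with |x| ≥ 3. Setting b̃₁ = b₂ + x·b₁, b̃₂ = b₁, and m̃ = ⟨b̃₂,b̃₁⟩/⟨b̃₁,b̃₁⟩, we have |m̃| ≤ 1/2, i.e. the new basis satisfies |⟨b̃₁,b̃₁⟩ / ⟨b̃₁,b̃₂⟩| ≥ 2. -/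
/-! If `v = b₂ + x • b₁` and `b₁ ≠ 0`, the coefficient of `v` along `b₁` is `m + x`, and the
product of the coefficient of `v` along `b₁` with that of `b₁` along `v` is
`cos² ∠(b₁, v) ≤ 1`. Hence the new coefficient has absolute value at most `1 / |m + x| ≤ 2 / 5`. -/

open RealInnerProductSpace

variable {E : Type*} [NormedAddCommGroup E] [InnerProductSpace ℝ E]

theorem abs_inner_div_inner_self_mul_abs_inner_div_inner_self_le_one (u v : E) :
    |⟪u, v⟫ / ⟪v, v⟫| * |⟪v, u⟫ / ⟪u, u⟫| ≤ 1 := by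
  have hden : 0 ≤ ⟪v, v⟫ * ⟪u, u⟫ := mul_nonneg real_inner_self_nonneg real_inner_self_nonneg
  rw [← abs_mul, real_inner_comm u v, div_mul_div_comm, abs_div, abs_mul_self, abs_of_nonneg hden]
  exact div_le_one_of_le₀ (by simpa only [mul_comm ⟪v, v⟫, real_inner_comm u v] using
    real_inner_mul_inner_self_le u v) hden

theorem inner_add_smul_div_inner_self {u : E} (hu : u ≠ 0) (w : E) (t : ℝ) :
    ⟪w + t • u, u⟫ / ⟪u, u⟫ = ⟪w, u⟫ / ⟪u, u⟫ + t := by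
  have hA : ⟪u, u⟫ ≠ 0 := inner_self_ne_zero.mpr hu
  rw [inner_add_left, real_inner_smul_left, add_div, mul_div_assoc, div_self hA, mul_one]

theorem stmt_8_general (b₁ b₂ : EuclideanSpace ℝ (Fin 2))
    (m : ℝ) (hm : m = (inner ℝ b₂ b₁ : ℝ) / (inner ℝ b₁ b₁ : ℝ))
    (hproper : -(1 / 2) ≤ m ∧ m < 1 / 2)
    (x : ℤ) (hx : 3 ≤ |x|) :
    |(inner ℝ b₁ (b₂ + (x : ℝ) • b₁) : ℝ) /
      (inner ℝ (b₂ + (x : ℝ) • b₁) (b₂ + (x : ℝ) • b₁) : ℝ)| ≤ 1 / 2 := by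
  rcases eq_or_ne b₁ 0 with rfl | hb₁
  · simp
  set v := b₂ + (x : ℝ) • b₁
  have hcoef : ⟪v, b₁⟫ / ⟪b₁, b₁⟫ = m + x := by
    rw [inner_add_smul_div_inner_self hb₁, hm]
  have hprod := abs_inner_div_inner_self_mul_abs_inner_div_inner_self_le_one b₁ v
  rw [hcoef] at hprod
  have hm_abs : |m| ≤ 1 / 2 := abs_le.mpr ⟨hproper.1, hproper.2.le⟩
  have hx_abs : (3 : ℝ) ≤ |(x : ℝ)| := by exact_mod_cast hx
  have hmx : 5 / 2 ≤ |m + x| := by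
    have := abs_sub_abs_le_abs_sub (x : ℝ) (-m)
    rw [abs_neg, sub_neg_eq_add, add_comm] at this
    linarith
  nlinarith [abs_nonneg (⟪b₁, v⟫ / ⟪v, v⟫)]

theorem stmt_8 (b₁ b₂ : EuclideanSpace ℝ (Fin 2))
    (hind : LinearIndependent ℝ ![b₁, b₂])
    (m : ℝ) (hm : m = (inner ℝ b₂ b₁ : ℝ) / (inner ℝ b₁ b₁ : ℝ))
    (hproper : -(1 / 2) ≤ m ∧ m < 1 / 2)
    (x : ℤ) (hx : 3 ≤ |x|) :
    |(inner ℝ b₁ (b₂ + (x : ℝ) • b₁) : ℝ) /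
      (inner ℝ (b₂ + (x : ℝ) • b₁) (b₂ + (x : ℝ) • b₁) : ℝ)| ≤ 1 / 2 :=
  stmt_8_general b₁ b₂ m hm hproper x hx
end

section
/- Let (b₁,b₂) be a proper basis of ℝ² and let x be an integer with |x| ≥ 3. Define ℓ(c₁,c₂) = |c₁|² + |c₂|². Then ℓ(b₂ + x·b₁, b₁) ≥ ℓ(b₂ + 2·b₁, b₁) and ℓ(b₂ + x·b₁, b₁) ≥ ℓ(b₂ − 2·b₁, b₁). -/
/-! Along the line `s ↦ b₂ + s • b₁` the squared norm is a parabola in `s` with vertex at `-m`.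
Since `|m| ≤ 1/2`, any `s` with `|s| ≥ |t| + 1` is farther from the vertex than `t`, so the integer
shifts `x` with `|x| ≥ 3` cannot beat the shifts by `±2`. -/

open scoped RealInnerProductSpace

section SizeReduced

variable {E : Type*} [NormedAddCommGroup E] [InnerProductSpace ℝ E]

theorem norm_add_smul_sq_sub_norm_add_smul_sq (u v : E) (s t : ℝ) :
    ‖v + s • u‖ ^ 2 - ‖v + t • u‖ ^ 2 = (s - t) * ((s + t) * ‖u‖ ^ 2 + 2 * ⟪v, u⟫) := by
  simp only [norm_add_sq_real, real_inner_smul_right, norm_smul, mul_pow, Real.norm_eq_abs, sq_abs]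
  ring

theorem norm_add_smul_le_norm_add_smul_of_abs_add_one_le {u v : E}
    (hred : 2 * |⟪v, u⟫| ≤ ‖u‖ ^ 2) {s t : ℝ} (hst : |t| + 1 ≤ |s|) :
    ‖v + t • u‖ ≤ ‖v + s • u‖ := by
  refine (sq_le_sq₀ (norm_nonneg _) (norm_nonneg _)).1 (sub_nonneg.1 ?_)
  rw [norm_add_smul_sq_sub_norm_add_smul_sq]
  have hvu : |2 * ⟪v, u⟫| ≤ ‖u‖ ^ 2 := by rwa [abs_mul, abs_two]
  obtain ⟨hvu_lo, hvu_hi⟩ := abs_le.1 hvu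
  have ht₁ := le_abs_self t
  have ht₂ := neg_abs_le t
  rcases le_total 0 s with hs | hs
  · rw [abs_of_nonneg hs] at hst
    have hsum : ‖u‖ ^ 2 ≤ (s + t) * ‖u‖ ^ 2 :=
      le_mul_of_one_le_left (sq_nonneg _) (by linarith)
    exact mul_nonneg (by linarith) (by linarith)
  · rw [abs_of_nonpos hs] at hst
    have hsum : (s + t) * ‖u‖ ^ 2 ≤ -‖u‖ ^ 2 := by
      rw [← neg_one_mul]
      exact mul_le_mul_of_nonneg_right (by linarith) (sq_nonneg _)
    exact mul_nonneg_of_nonpos_of_nonpos (by linarith) (by linarith)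

end SizeReduced

theorem stmt_10_general (b₁ b₂ : EuclideanSpace ℝ (Fin 2))
    (m : ℝ) (hm : m = (inner ℝ b₂ b₁ : ℝ) / (inner ℝ b₁ b₁ : ℝ))
    (hproper : -(1 / 2) ≤ m ∧ m < 1 / 2)
    (x : ℤ) (hx : 3 ≤ |x|) :
    ‖b₂ + (2 : ℝ) • b₁‖ ^ 2 + ‖b₁‖ ^ 2 ≤ ‖b₂ + (x : ℝ) • b₁‖ ^ 2 + ‖b₁‖ ^ 2 ∧
    ‖b₂ - (2 : ℝ) • b₁‖ ^ 2 + ‖b₁‖ ^ 2 ≤ ‖b₂ + (x : ℝ) • b₁‖ ^ 2 + ‖b₁‖ ^ 2 := by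
  have hinner : ⟪b₂, b₁⟫ = m * ‖b₁‖ ^ 2 := by
    rcases eq_or_ne b₁ 0 with rfl | hb₁
    · simp
    · rw [hm, real_inner_self_eq_norm_sq]
      field_simp
  have hred : 2 * |⟪b₂, b₁⟫| ≤ ‖b₁‖ ^ 2 := by
    rw [hinner, abs_mul, abs_of_nonneg (sq_nonneg ‖b₁‖), ← mul_assoc]
    have hm_abs : 2 * |m| ≤ 1 := by linarith [abs_le.2 ⟨hproper.1, hproper.2.le⟩]
    exact mul_le_of_le_one_left (sq_nonneg _) hm_abs
  have hx' : (3 : ℝ) ≤ |(x : ℝ)| := by exact_mod_cast hx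
  have shift_two_le (t : ℝ) (ht : |t| = 2) :
      ‖b₂ + t • b₁‖ ^ 2 + ‖b₁‖ ^ 2 ≤ ‖b₂ + (x : ℝ) • b₁‖ ^ 2 + ‖b₁‖ ^ 2 := by
    gcongr
    exact norm_add_smul_le_norm_add_smul_of_abs_add_one_le hred (by linarith)
  refine ⟨shift_two_le 2 (by norm_num), ?_⟩
  rw [sub_eq_add_neg, ← neg_smul]
  exact shift_two_le (-2) (by norm_num)

theorem stmt_10 (b₁ b₂ : EuclideanSpace ℝ (Fin 2))
    (hind : LinearIndependent ℝ ![b₁, b₂])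
    (m : ℝ) (hm : m = (inner ℝ b₂ b₁ : ℝ) / (inner ℝ b₁ b₁ : ℝ))
    (hproper : -(1 / 2) ≤ m ∧ m < 1 / 2)
    (x : ℤ) (hx : 3 ≤ |x|) :
    ‖b₂ + (2 : ℝ) • b₁‖ ^ 2 + ‖b₁‖ ^ 2 ≤ ‖b₂ + (x : ℝ) • b₁‖ ^ 2 + ‖b₁‖ ^ 2 ∧
    ‖b₂ - (2 : ℝ) • b₁‖ ^ 2 + ‖b₁‖ ^ 2 ≤ ‖b₂ + (x : ℝ) • b₁‖ ^ 2 + ‖b₁‖ ^ 2 :=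
  stmt_10_general b₁ b₂ m hm hproper x hx
end

section
/- Let (b₁,b₂) be a reduced (Gauss-reduced, proper with |b₁| ≤ |b₂|) basis of ℝ², let k ≥ 1, and let x, x′ be integers with x ≥ x′ ≥ 0. Write M_y for the basis obtained by applying the matrix (S·T²)^k·S·T^y to the basis matrix with rows b₁, b₂. Then ℓ(M_x) ≥ ℓ(M_{x′}), where ℓ is the sum of squared norms of the two rows. -/
open Matrix

def Smat : Matrix (Fin 2) (Fin 2) ℤ := !![0, 1; 1, 0]

def Tpow (x : ℤ) : Matrix (Fin 2) (Fin 2) ℤ := !![1, 0; x, 1]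

/-- The rows of the basis obtained by applying an integer matrix `U` to the basis
matrix with rows `b₁`, `b₂`. -/
noncomputable def rowAct (U : Matrix (Fin 2) (Fin 2) ℤ) (b₁ b₂ : EuclideanSpace ℝ (Fin 2)) :
    Fin 2 → EuclideanSpace ℝ (Fin 2) :=
  fun i => (U i 0 : ℝ) • b₁ + (U i 1 : ℝ) • b₂

/-- The length `ℓ` (sum of squared norms of the rows) of `U` applied to the basis. -/
noncomputable def lenAct (U : Matrix (Fin 2) (Fin 2) ℤ) (b₁ b₂ : EuclideanSpace ℝ (Fin 2)) : ℝ :=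
  ‖rowAct U b₁ b₂ 0‖ ^ 2 + ‖rowAct U b₁ b₂ 1‖ ^ 2

/-!
Row `i` of `A · S · T^y` is `(a y + c, a)` with `(a, c)` row `i` of `A`, so the squared norm of
the corresponding basis vector is a quadratic in `y` with leading coefficient `a² ‖b₁‖²`.
For `A = (S T²)^k` all entries are nonnegative, and reducedness gives
`⟪b₁, b₂⟫ ≥ -‖b₁‖² / 2`; together these make the increment from `y'` to `y > y' ≥ 0`
equal to `(u - u') ((u + u') ‖b₁‖² + 2 a ⟪b₁, b₂⟫) ≥ (u - u') (u + u' - a) ‖b₁‖² ≥ 0`,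
where `u = a y + c` and `u' = a y' + c`.
-/

section InnerProductSpace

variable {E : Type*} [NormedAddCommGroup E] [InnerProductSpace ℝ E]

open scoped RealInnerProductSpace

theorem neg_half_norm_sq_le_inner {b₁ b₂ : E} (h : -(1 / 2) ≤ ⟪b₂, b₁⟫ / ⟪b₁, b₁⟫) :
    -(‖b₁‖ ^ 2 / 2) ≤ ⟪b₁, b₂⟫ := by
  rcases eq_or_ne b₁ 0 with rfl | hb₁
  · simp
  have hpos : 0 < ⟪b₁, b₁⟫ := real_inner_self_pos.mpr hb₁
  rw [le_div_iff₀ hpos, real_inner_self_eq_norm_sq, real_inner_comm] at h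
  linarith

theorem norm_sq_smul_add_smul_le {b₁ b₂ : E} (h : -(‖b₁‖ ^ 2 / 2) ≤ ⟪b₁, b₂⟫)
    {p u u' : ℝ} (hp : 0 ≤ p) (hu : u' ≤ u) (hsum : p ≤ u + u') :
    ‖u' • b₁ + p • b₂‖ ^ 2 ≤ ‖u • b₁ + p • b₂‖ ^ 2 := by
  have expand : ∀ v : ℝ, ‖v • b₁ + p • b₂‖ ^ 2
      = v ^ 2 * ‖b₁‖ ^ 2 + 2 * v * p * ⟪b₁, b₂⟫ + p ^ 2 * ‖b₂‖ ^ 2 := fun v => by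
    rw [norm_add_sq_real, real_inner_smul_left, real_inner_smul_right, norm_smul, norm_smul,
      Real.norm_eq_abs, Real.norm_eq_abs, mul_pow, mul_pow, sq_abs, sq_abs]
    ring
  rw [expand, expand]
  have key : 0 ≤ (u - u') * ((u + u' - p) * ‖b₁‖ ^ 2) :=
    mul_nonneg (sub_nonneg.mpr hu) (mul_nonneg (sub_nonneg.mpr hsum) (sq_nonneg _))
  nlinarith [mul_nonneg (mul_nonneg (sub_nonneg.mpr hu) hp) (neg_le_iff_add_nonneg.mp h)]

end InnerProductSpace

theorem Smat_mul_Tpow_two_pow_nonneg (k : ℕ) (i j : Fin 2) : 0 ≤ ((Smat * Tpow 2) ^ k) i j := by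
  induction k generalizing i j with
  | zero => fin_cases i <;> fin_cases j <;> simp
  | succ n ih =>
    rw [pow_succ, mul_apply, Fin.sum_univ_two]
    have hST : ∀ i j, 0 ≤ (Smat * Tpow 2) i j := by
      intro i j
      fin_cases i <;> fin_cases j <;> simp [Smat, Tpow, mul_apply]
    have := ih i 0
    have := ih i 1
    have := hST 0 j
    have := hST 1 j
    positivity

theorem rowAct_mul_Smat_mul_Tpow (A : Matrix (Fin 2) (Fin 2) ℤ) (y : ℤ)
    (b₁ b₂ : EuclideanSpace ℝ (Fin 2)) (i : Fin 2) :
    rowAct (A * Smat * Tpow y) b₁ b₂ i = ((A i 0 * y + A i 1 : ℤ) : ℝ) • b₁ + (A i 0 : ℝ) • b₂ := by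
  simp [rowAct, Smat, Tpow, mul_apply, mul_comm, add_comm]

theorem norm_sq_rowAct_mul_Smat_mul_Tpow_le {b₁ b₂ : EuclideanSpace ℝ (Fin 2)}
    (h : -(‖b₁‖ ^ 2 / 2) ≤ inner ℝ b₁ b₂) {A : Matrix (Fin 2) (Fin 2) ℤ} {i : Fin 2}
    (hA₀ : 0 ≤ A i 0) (hA₁ : 0 ≤ A i 1) {x x' : ℤ} (hx' : 0 ≤ x') (hxx : x' < x) :
    ‖rowAct (A * Smat * Tpow x') b₁ b₂ i‖ ^ 2 ≤ ‖rowAct (A * Smat * Tpow x) b₁ b₂ i‖ ^ 2 := by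
  rw [rowAct_mul_Smat_mul_Tpow, rowAct_mul_Smat_mul_Tpow]
  refine norm_sq_smul_add_smul_le h (by exact_mod_cast hA₀) ?_ ?_
  · exact_mod_cast add_le_add_left (mul_le_mul_of_nonneg_left hxx.le hA₀) (A i 1)
  · have : A i 0 * 1 ≤ A i 0 * (x + x') := mul_le_mul_of_nonneg_left (by omega) hA₀
    exact_mod_cast (by linarith : A i 0 ≤ A i 0 * x + A i 1 + (A i 0 * x' + A i 1))

theorem lenAct_mul_Smat_mul_Tpow_mono {b₁ b₂ : EuclideanSpace ℝ (Fin 2)}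
    (h : -(‖b₁‖ ^ 2 / 2) ≤ inner ℝ b₁ b₂) {A : Matrix (Fin 2) (Fin 2) ℤ} (hA : ∀ i j, 0 ≤ A i j)
    {x x' : ℤ} (hx' : 0 ≤ x') (hxx : x' ≤ x) :
    lenAct (A * Smat * Tpow x') b₁ b₂ ≤ lenAct (A * Smat * Tpow x) b₁ b₂ := by
  rcases hxx.eq_or_lt with rfl | hlt
  · exact le_rfl
  exact add_le_add (norm_sq_rowAct_mul_Smat_mul_Tpow_le h (hA 0 0) (hA 0 1) hx' hlt)
    (norm_sq_rowAct_mul_Smat_mul_Tpow_le h (hA 1 0) (hA 1 1) hx' hlt)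

theorem stmt_17_general (b₁ b₂ : EuclideanSpace ℝ (Fin 2))
    (m : ℝ) (hm : m = (inner ℝ b₂ b₁ : ℝ) / (inner ℝ b₁ b₁ : ℝ))
    (hproper : -(1 / 2) ≤ m ∧ m < 1 / 2)
    (k : ℕ) (x x' : ℤ) (hx' : 0 ≤ x') (hxx : x' ≤ x) :
    lenAct ((Smat * Tpow 2) ^ k * Smat * Tpow x') b₁ b₂ ≤
      lenAct ((Smat * Tpow 2) ^ k * Smat * Tpow x) b₁ b₂ :=
  lenAct_mul_Smat_mul_Tpow_mono (neg_half_norm_sq_le_inner (hm ▸ hproper.1))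
    (Smat_mul_Tpow_two_pow_nonneg k) hx' hxx

theorem stmt_17 (b₁ b₂ : EuclideanSpace ℝ (Fin 2))
    (hind : LinearIndependent ℝ ![b₁, b₂])
    (m : ℝ) (hm : m = (inner ℝ b₂ b₁ : ℝ) / (inner ℝ b₁ b₁ : ℝ))
    (hproper : -(1 / 2) ≤ m ∧ m < 1 / 2)
    (hred : ‖b₁‖ ≤ ‖b₂‖)
    (k : ℕ) (hk : 1 ≤ k) (x x' : ℤ) (hx' : 0 ≤ x') (hxx : x' ≤ x) :
    lenAct ((Smat * Tpow 2) ^ k * Smat * Tpow x') b₁ b₂ ≤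
      lenAct ((Smat * Tpow 2) ^ k * Smat * Tpow x) b₁ b₂ :=
  stmt_17_general b₁ b₂ m hm hproper k x x' hx' hxx
end

section
/- Every element of GL(2,ℤ) can be written as a product T^{x_{k+1}}·S·T^{x_k}·S·…·S·T^{x_1} for some k ≥ 0 and integers x_1,…,x_{k+1}; i.e. the matrices S = [[0,1],[1,0]] and T = [[1,0],[1,1]] generate GL(2,ℤ). -/
/-!
Mathlib's generators `S = !![0, -1; 1, 0]` and `T = !![1, 1; 0, 1]` of `SL(2, ℤ)` are words in
`Sgl` and `Tgl`, and `Sgl` has determinant `-1`, so `Sgl` and `Tgl` generate `GL(2, ℤ)`.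
The products `T^{x_{k+1}} S T^{x_k} ⋯ S T^{x_1}` contain `1` and are stable under left
multiplication by `S = S⁻¹` and by `T^{±1}`, hence they exhaust the subgroup generated by `S` and `T`.
-/

open Matrix

def Sgl : (Matrix (Fin 2) (Fin 2) ℤ)ˣ :=
  ⟨!![0, 1; 1, 0], !![0, 1; 1, 0], by decide, by decide⟩

def Tgl : (Matrix (Fin 2) (Fin 2) ℤ)ˣ :=
  ⟨!![1, 0; 1, 1], !![1, 0; -1, 1], by decide, by decide⟩

open MatrixGroups

lemma Sgl_mul_Sgl : Sgl * Sgl = 1 := Units.ext (by decide)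

lemma toGL_modularGroup_S :
    SpecialLinearGroup.toGL ModularGroup.S = Tgl * Sgl * Tgl⁻¹ * Sgl * Tgl :=
  Units.ext (by decide)

lemma toGL_modularGroup_T : SpecialLinearGroup.toGL ModularGroup.T = Sgl * Tgl * Sgl :=
  Units.ext (by decide)

lemma range_toGL_le_closure_Sgl_Tgl :
    (SpecialLinearGroup.toGL : SL(2, ℤ) →* GL (Fin 2) ℤ).range ≤ Subgroup.closure {Sgl, Tgl} := by
  have hS : Sgl ∈ Subgroup.closure {Sgl, Tgl} := Subgroup.subset_closure (by simp)
  have hT : Tgl ∈ Subgroup.closure {Sgl, Tgl} := Subgroup.subset_closure (by simp)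
  rw [MonoidHom.range_eq_map, ← SpecialLinearGroup.SL2Z_generators, MonoidHom.map_closure,
    Subgroup.closure_le, Set.image_pair, toGL_modularGroup_S, toGL_modularGroup_T]
  rintro _ (rfl | rfl)
  · exact mul_mem (mul_mem (mul_mem (mul_mem hT hS) (inv_mem hT)) hS) hT
  · exact mul_mem (mul_mem hS hT) hS

lemma closure_Sgl_Tgl_eq_top : Subgroup.closure {Sgl, Tgl} = ⊤ := by
  refine (Subgroup.eq_top_iff' _).mpr fun U => ?_
  have hSdet : (Sgl : Matrix (Fin 2) (Fin 2) ℤ).det = -1 := by decide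
  rcases Int.isUnit_iff.mp (isUnits_det_units U) with hU | hU
  · exact range_toGL_le_closure_Sgl_Tgl ⟨⟨U, hU⟩, Units.ext rfl⟩
  · have hUS : U * Sgl ∈ Subgroup.closure {Sgl, Tgl} := range_toGL_le_closure_Sgl_Tgl
      ⟨⟨U * Sgl, by simp [det_mul, hSdet, hU]⟩, Units.ext rfl⟩
    simpa [mul_assoc, Sgl_mul_Sgl] using mul_mem hUS (Subgroup.subset_closure (by simp) : Sgl ∈ _)

def IsSTWord (U : (Matrix (Fin 2) (Fin 2) ℤ)ˣ) : Prop :=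
  ∃ (k : ℕ) (x : ℕ → ℤ),
    U = Tgl ^ x (k + 1) * (List.ofFn fun i : Fin k => Sgl * Tgl ^ x (k - (i : ℕ))).prod

lemma prod_ofFn_Sgl_mul_Tgl_zpow_congr {k : ℕ} {x y : ℕ → ℤ} (h : ∀ j ≤ k, x j = y j) :
    (List.ofFn fun i : Fin k => Sgl * Tgl ^ x (k - (i : ℕ))).prod
      = (List.ofFn fun i : Fin k => Sgl * Tgl ^ y (k - (i : ℕ))).prod := by
  simp only [h _ (Nat.sub_le k _)]

namespace IsSTWord

lemma one : IsSTWord 1 := ⟨0, fun _ => 0, by simp⟩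

lemma Tgl_zpow_mul {U : (Matrix (Fin 2) (Fin 2) ℤ)ˣ} (hU : IsSTWord U) (e : ℤ) :
    IsSTWord (Tgl ^ e * U) := by
  obtain ⟨k, x, rfl⟩ := hU
  refine ⟨k, Function.update x (k + 1) (e + x (k + 1)), ?_⟩
  have hagree : ∀ j ≤ k, x j = Function.update x (k + 1) (e + x (k + 1)) j :=
    fun j hj => (Function.update_of_ne (by omega) _ _).symm
  rw [Function.update_self, _root_.zpow_add, mul_assoc, prod_ofFn_Sgl_mul_Tgl_zpow_congr hagree]

lemma Sgl_mul {U : (Matrix (Fin 2) (Fin 2) ℤ)ˣ} (hU : IsSTWord U) : IsSTWord (Sgl * U) := by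
  obtain ⟨k, x, rfl⟩ := hU
  refine ⟨k + 1, Function.update x (k + 2) 0, ?_⟩
  rw [Function.update_self, zpow_zero, one_mul, List.ofFn_succ, List.prod_cons]
  have hagree : ∀ j ≤ k, x j = Function.update x (k + 2) 0 j :=
    fun j hj => (Function.update_of_ne (by omega) _ _).symm
  simp [Fin.val_succ, mul_assoc, prod_ofFn_Sgl_mul_Tgl_zpow_congr hagree]

end IsSTWord

lemma isSTWord_of_mem_closure {U : (Matrix (Fin 2) (Fin 2) ℤ)ˣ}
    (hU : U ∈ Subgroup.closure {Sgl, Tgl}) : IsSTWord U := by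
  induction hU using Subgroup.closure_induction_left with
  | one => exact IsSTWord.one
  | mul_left g hg V _ hV =>
    rcases hg with rfl | rfl
    · exact hV.Sgl_mul
    · simpa using hV.Tgl_zpow_mul 1
  | inv_mul_cancel g hg V _ hV =>
    rcases hg with rfl | rfl
    · simpa [inv_eq_of_mul_eq_one_right Sgl_mul_Sgl] using hV.Sgl_mul
    · simpa using hV.Tgl_zpow_mul (-1)

/-- `S` and `T` generate `GL(2, ℤ)`: every unimodular matrix is a product
`T^{x_{k+1}} · S·T^{x_k} · ⋯ · S·T^{x_1}`. -/
theorem stmt_19 :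
    (Subgroup.closure {Sgl, Tgl} = (⊤ : Subgroup (Matrix (Fin 2) (Fin 2) ℤ)ˣ)) ∧
    ∀ U : (Matrix (Fin 2) (Fin 2) ℤ)ˣ, ∃ (k : ℕ) (x : ℕ → ℤ),
      U = Tgl ^ x (k + 1) * (List.ofFn fun i : Fin k => Sgl * Tgl ^ x (k - (i : ℕ))).prod :=
  ⟨closure_Sgl_Tgl_eq_top, fun U =>
    isSTWord_of_mem_closure (closure_Sgl_Tgl_eq_top ▸ Subgroup.mem_top U)⟩
end
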